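/- Let d ≥ 2 and a ∈ ℂ^d∖{0}. Then at least one of the following holds: (i) #Ω_div^{−1}(a) ≤ 3·μ^{d−2}; (ii) there exists j ∈ {1,…,d} such that Ω_div^{−1}(a) = {γ ∈ G∖{0} : γ_j = 0}; (iii) there exist j₁ ≠ j₂ in {1,…,d} such that Ω_div^{−1}(a) = {γ ∈ G∖{0} : γ_{j₁} = γ_{j₂}}. Here Ω_div^{−1}(a) = {γ ∈ G∖{0} : a ∈ Ω_div(γ)}. -/

import Mathlib

open Finset

noncomputable section

namespace TracePaper

/-- The group `G = (ℤ/μ)^d`. -/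
abbrev Gp (μ d : ℕ) : Type := Fin d → ZMod μ

/-- The character value `e^{2πi z/μ}` for `z ∈ ℤ/μ` (via the representative `z.val`). -/
def ch (μ : ℕ) (z : ZMod μ) : ℂ :=
  Complex.exp (2 * Real.pi * Complex.I * (z.val : ℂ) / (μ : ℂ))

/-- `Ω_div⁻¹(a) = {γ ∈ G \ {0} : a ∈ Ω_div(γ)}`, where
`Ω_div(γ) = {ζ ∈ ℂ^d : ∑_j ζ_j (e^{2πiγ_j/μ}-1) = 0}`. -/
def OmDivInv (μ d : ℕ) (a : Fin d → ℂ) : Set (Gp μ d) :=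
  {γ | γ ≠ 0 ∧ ∑ j, a j * (ch μ (γ j) - 1) = 0}

/-!
Write `L γ = ∑ₖ aₖ ch(γₖ)` (`charSum`), so that `Ω_div⁻¹(a)` consists of the nonzero solutions of
`L γ = ∑ₖ aₖ`. If `a` has a single nonzero entry `a_j`, this equation says `γ_j = 0`; if it has
exactly two, opposite, nonzero entries, it says `γ_{j₁} = γ_{j₂}`.

Otherwise pick `j₁ ≠ j₂` with `a_{j₁}, a_{j₂} ≠ 0` and split the solutions according to
`c = a_{j₁} ch(γ_{j₁}) + a_{j₂} ch(γ_{j₂})`, which is constant on the fibres of the projection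
forgetting the coordinates `j₁, j₂`. If `c ≠ 0`, then `a_{j₁} ch(γ_{j₁})` lies on both circles
`|z| = |a_{j₁}|` and `|z - c| = |a_{j₂}|` and determines `γ` within its fibre, so a fibre holds at
most two solutions: `2 μ^{d-2}` in all. If `c = 0`, there is a third nonzero coefficient `a_{j₃}`
(otherwise `c = L γ = ∑ₖ aₖ = a_{j₁} + a_{j₂}`, which is nonzero outside the previous case), and
such a solution is determined by its coordinates off `{j₂, j₃}`: at most `μ^{d-2}` of them.
-/

lemma card_le_two_of_dist_eq_of_dist_eq {V P : Type*} [NormedAddCommGroup V]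
    [InnerProductSpace ℝ V] [MetricSpace P] [NormedAddTorsor V P] [FiniteDimensional ℝ V]
    (hd : Module.finrank ℝ V = 2) {c₁ c₂ : P} (hc : c₁ ≠ c₂) {r₁ r₂ : ℝ} (F : Finset P)
    (hF : ∀ p ∈ F, dist p c₁ = r₁ ∧ dist p c₂ = r₂) : #F ≤ 2 := by
  by_contra! h
  obtain ⟨p₁, h₁, p₂, h₂, p, hp, h₁₂, h₁p, h₂p⟩ := two_lt_card.1 h
  rcases EuclideanGeometry.eq_of_dist_eq_of_dist_eq_of_finrank_eq_two hd hc h₁₂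
    (hF p₁ h₁).1 (hF p₂ h₂).1 (hF p hp).1 (hF p₁ h₁).2 (hF p₂ h₂).2 (hF p hp).2 with h | h
  · exact h₁p h.symm
  · exact h₂p h.symm

lemma card_le_mul_pow_of_fiber_le {ι α : Type*} [Fintype ι] [DecidableEq ι] [Fintype α]
    [DecidableEq α] (s : Finset ι) (T : Finset (ι → α)) (n : ℕ)
    (hT : ∀ γ ∈ T, #{γ' ∈ T | ∀ k ∉ s, γ' k = γ k} ≤ n) :
    #T ≤ n * Fintype.card α ^ (Fintype.card ι - #s) := by
  let r : (ι → α) → (↥sᶜ → α) := fun γ k => γ k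
  calc #T ≤ n * #(T.image r) := by
        refine card_le_mul_card_image T n fun t ht => ?_
        obtain ⟨γ, hγ, rfl⟩ := mem_image.1 ht
        convert hT γ hγ using 3 with γ'
        simp [r, funext_iff]
    _ ≤ n * Fintype.card (↥sᶜ → α) := Nat.mul_le_mul_left n (card_le_univ _)
    _ = n * Fintype.card α ^ (Fintype.card ι - #s) := by
        rw [Fintype.card_fun, Fintype.card_coe, card_compl]

lemma sum_sub_sum_eq_sum_of_eq_off {ι β M : Type*} [Fintype ι] [AddCommGroup M]
    (f : ι → β → M) (s : Finset ι) {γ γ' : ι → β} (h : ∀ k ∉ s, γ k = γ' k) :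
    ∑ k, f k (γ k) - ∑ k, f k (γ' k) = ∑ k ∈ s, (f k (γ k) - f k (γ' k)) := by
  rw [← sum_sub_distrib]
  exact (sum_subset (subset_univ s) fun k _ hk => by rw [h k hk, sub_self]).symm

section Character

variable {μ : ℕ}

lemma ch_eq_pow (z : ZMod μ) : ch μ z = Complex.exp (2 * Real.pi * Complex.I / μ) ^ z.val := by
  rw [ch, ← Complex.exp_nat_mul]
  ring_nf

@[simp]
lemma ch_zero [NeZero μ] : ch μ 0 = 1 := by
  rw [ch_eq_pow, ZMod.val_zero, pow_zero]

lemma ch_injective [NeZero μ] : Function.Injective (ch μ) := fun x y h =>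
  ZMod.val_injective μ <| (Complex.isPrimitiveRoot_exp μ (NeZero.ne μ)).pow_inj
    (ZMod.val_lt x) (ZMod.val_lt y) (by rwa [ch_eq_pow, ch_eq_pow] at h)

@[simp]
lemma norm_ch (z : ZMod μ) : ‖ch μ z‖ = 1 := by
  rw [ch, ← Complex.norm_exp_ofReal_mul_I (2 * Real.pi * z.val / μ)]
  push_cast
  ring_nf

end Character

section Solutions

variable {ι : Type*} [Fintype ι] {μ : ℕ} {a : ι → ℂ}

def charSum (μ : ℕ) (a : ι → ℂ) (γ : ι → ZMod μ) : ℂ := ∑ k, a k * ch μ (γ k)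

def divSolutions [DecidableEq ι] (μ : ℕ) [NeZero μ] (a : ι → ℂ) : Finset (ι → ZMod μ) :=
  {γ | charSum μ a γ = ∑ k, a k}

lemma eq_of_charSum_eq_of_eq_off [NeZero μ] {j : ι} (hj : a j ≠ 0) {γ γ' : ι → ZMod μ}
    (hoff : ∀ k ≠ j, γ k = γ' k) (hsum : charSum μ a γ = charSum μ a γ') : γ = γ' := by
  have h := sum_sub_sum_eq_sum_of_eq_off (fun k z => a k * ch μ z) {j}
    (γ := γ) (γ' := γ') (by simpa using hoff)
  rw [← charSum, ← charSum, hsum, sub_self, sum_singleton, ← mul_sub, eq_comm,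
    mul_eq_zero_iff_left hj, sub_eq_zero] at h
  funext k
  obtain rfl | hk := eq_or_ne k j
  · exact ch_injective h
  · exact hoff k hk

lemma pair_eq_of_charSum_eq_of_eq_off [DecidableEq ι] {j₁ j₂ : ι} (hj : j₁ ≠ j₂)
    {γ γ' : ι → ZMod μ}
    (hoff : ∀ k ∉ ({j₁, j₂} : Finset ι), γ k = γ' k) (hsum : charSum μ a γ = charSum μ a γ') :
    a j₁ * ch μ (γ j₁) + a j₂ * ch μ (γ j₂) = a j₁ * ch μ (γ' j₁) + a j₂ * ch μ (γ' j₂) := by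
  have h := sum_sub_sum_eq_sum_of_eq_off (fun k z => a k * ch μ z) _ hoff
  rw [← charSum, ← charSum, hsum, sub_self, sum_pair hj] at h
  linear_combination -h

lemma charSum_of_eq_zero_off_pair {j₁ j₂ : ι} (hj : j₁ ≠ j₂)
    (h0 : ∀ k, k ≠ j₁ → k ≠ j₂ → a k = 0) (γ : ι → ZMod μ) :
    charSum μ a γ = a j₁ * ch μ (γ j₁) + a j₂ * ch μ (γ j₂) :=
  Fintype.sum_eq_add j₁ j₂ hj fun k hk => by rw [h0 k hk.1 hk.2, zero_mul]

lemma mem_divSolutions_iff_of_eq_zero_off [DecidableEq ι] [NeZero μ] {j : ι} (hj : a j ≠ 0)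
    (h0 : ∀ k ≠ j, a k = 0) {γ : ι → ZMod μ} : γ ∈ divSolutions μ a ↔ γ j = 0 := by
  have hsum : ∑ k, a k = a j := Fintype.sum_eq_single j h0
  have hchar : charSum μ a γ = a j * ch μ (γ j) :=
    Fintype.sum_eq_single j fun k hk => by rw [h0 k hk, zero_mul]
  rw [divSolutions, mem_filter_univ, hchar, hsum, mul_eq_left₀ hj, ← ch_zero (μ := μ)]
  exact ch_injective.eq_iff

lemma mem_divSolutions_iff_of_eq_zero_off_pair [DecidableEq ι] [NeZero μ]
    {j₁ j₂ : ι} (hj : j₁ ≠ j₂) (h₁ : a j₁ ≠ 0)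
    (h0 : ∀ k, k ≠ j₁ → k ≠ j₂ → a k = 0) (hsum : a j₁ + a j₂ = 0) {γ : ι → ZMod μ} :
    γ ∈ divSolutions μ a ↔ γ j₁ = γ j₂ := by
  have hsum' : ∑ k, a k = 0 := by
    rw [Fintype.sum_eq_add j₁ j₂ hj fun k hk => h0 k hk.1 hk.2, hsum]
  rw [divSolutions, mem_filter_univ, charSum_of_eq_zero_off_pair hj h0, hsum',
    ← ch_injective.eq_iff, eq_neg_of_add_eq_zero_right hsum]
  constructor
  · intro h
    have : a j₁ * (ch μ (γ j₁) - ch μ (γ j₂)) = 0 := by linear_combination h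
    exact sub_eq_zero.1 ((mul_eq_zero_iff_left h₁).1 this)
  · intro h
    rw [h]
    ring

end Solutions

lemma mem_OmDivInv {μ d : ℕ} [NeZero μ] {a : Fin d → ℂ} {γ : Gp μ d} :
    γ ∈ OmDivInv μ d a ↔ γ ≠ 0 ∧ γ ∈ divSolutions μ a := by
  rw [divSolutions, mem_filter, charSum]
  simp only [OmDivInv, Set.mem_ofPred_eq, mem_univ, true_and, mul_sub, mul_one, sum_sub_distrib,
    sub_eq_zero]

section Counting

variable {ι : Type*} [Fintype ι] [DecidableEq ι] {μ : ℕ} [NeZero μ] {a : ι → ℂ} {j₁ j₂ : ι}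

lemma card_filter_pair_ne_zero_le (hj : j₁ ≠ j₂) (h₁ : a j₁ ≠ 0) (h₂ : a j₂ ≠ 0) :
    #{γ ∈ divSolutions μ a | a j₁ * ch μ (γ j₁) + a j₂ * ch μ (γ j₂) ≠ 0} ≤
      2 * μ ^ (Fintype.card ι - 2) := by
  have h := card_le_mul_pow_of_fiber_le {j₁, j₂}
    {γ ∈ divSolutions μ a | a j₁ * ch μ (γ j₁) + a j₂ * ch μ (γ j₂) ≠ 0} 2 ?_
  · simpa only [card_pair hj, ZMod.card] using h
  intro γ hγ
  simp only [divSolutions, mem_filter, mem_univ, true_and] at hγ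
  have hF : ∀ γ' ∈ {γ' ∈ {γ ∈ divSolutions μ a | a j₁ * ch μ (γ j₁) + a j₂ * ch μ (γ j₂) ≠ 0} |
      ∀ k ∉ ({j₁, j₂} : Finset ι), γ' k = γ k}, charSum μ a γ' = ∑ k, a k ∧
      (∀ k ∉ ({j₁, j₂} : Finset ι), γ' k = γ k) ∧
      a j₁ * ch μ (γ' j₁) + a j₂ * ch μ (γ' j₂) = a j₁ * ch μ (γ j₁) + a j₂ * ch μ (γ j₂) := by
    intro γ' hγ'
    simp only [divSolutions, mem_filter, mem_univ, true_and] at hγ'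
    exact ⟨hγ'.1.1, hγ'.2, pair_eq_of_charSum_eq_of_eq_off hj hγ'.2 (hγ'.1.1.trans hγ.1.symm)⟩
  rw [← card_image_of_injOn (f := fun γ' => a j₁ * ch μ (γ' j₁))]
  · refine card_le_two_of_dist_eq_of_dist_eq Complex.finrank_real_complex (Ne.symm hγ.2)
      (r₁ := ‖a j₁‖) (r₂ := ‖a j₂‖) _ ?_
    simp only [mem_image]
    rintro _ ⟨γ', hγ', rfl⟩
    rw [dist_zero_right, dist_eq_norm, ← (hF γ' hγ').2.2]
    simp
  · intro γ' hγ' γ'' hγ'' h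
    obtain ⟨hs', hoff', -⟩ := hF γ' hγ'
    obtain ⟨hs'', hoff'', -⟩ := hF γ'' hγ''
    have h₁ : γ' j₁ = γ'' j₁ := ch_injective (mul_left_cancel₀ h₁ h)
    refine eq_of_charSum_eq_of_eq_off h₂ (fun k hk => ?_) (hs'.trans hs''.symm)
    obtain rfl | hk₁ := eq_or_ne k j₁
    · exact h₁
    · have hk : k ∉ ({j₁, j₂} : Finset ι) := by simp [hk, hk₁]
      rw [hoff' k hk, hoff'' k hk]

lemma card_filter_pair_eq_zero_le (hj : j₁ ≠ j₂) (h₂ : a j₂ ≠ 0)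
    (hdiag : ¬((∀ k, k ≠ j₁ → k ≠ j₂ → a k = 0) ∧ a j₁ + a j₂ = 0)) :
    #{γ ∈ divSolutions μ a | a j₁ * ch μ (γ j₁) + a j₂ * ch μ (γ j₂) = 0} ≤
      μ ^ (Fintype.card ι - 2) := by
  by_cases h0 : ∀ k, k ≠ j₁ → k ≠ j₂ → a k = 0
  · have hsum : ∑ k, a k = a j₁ + a j₂ := Fintype.sum_eq_add j₁ j₂ hj fun k hk => h0 k hk.1 hk.2
    rw [filter_false_of_mem, card_empty]
    · exact Nat.zero_le _
    intro γ hγ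
    simp only [divSolutions, mem_filter, mem_univ, true_and, charSum_of_eq_zero_off_pair hj h0,
      hsum] at hγ
    rw [hγ]
    exact fun h => hdiag ⟨h0, h⟩
  push Not at h0
  obtain ⟨j₃, h₃₁, h₃₂, h₃⟩ := h0
  have h := card_le_mul_pow_of_fiber_le {j₂, j₃}
    {γ ∈ divSolutions μ a | a j₁ * ch μ (γ j₁) + a j₂ * ch μ (γ j₂) = 0} 1 ?_
  · simpa only [card_pair h₃₂.symm, ZMod.card, one_mul] using h
  intro γ _
  refine card_le_one.2 fun γ' hγ' γ'' hγ'' => ?_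
  simp only [divSolutions, mem_filter, mem_univ, true_and] at hγ' hγ''
  have hoff : ∀ k ∉ ({j₂, j₃} : Finset ι), γ' k = γ'' k := fun k hk =>
    (hγ'.2 k hk).trans (hγ''.2 k hk).symm
  have h₁ : γ' j₁ = γ'' j₁ := hoff j₁ (by simp [hj, h₃₁.symm])
  have h₂' : γ' j₂ = γ'' j₂ := by
    refine ch_injective (mul_left_cancel₀ h₂ ?_)
    linear_combination hγ'.1.2 - hγ''.1.2 - a j₁ * congrArg (ch μ) h₁
  refine eq_of_charSum_eq_of_eq_off h₃ (fun k hk => ?_) (hγ'.1.1.trans hγ''.1.1.symm)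
  obtain rfl | hk₂ := eq_or_ne k j₂
  · exact h₂'
  · exact hoff k (by simp [hk, hk₂])

lemma card_divSolutions_le (hj : j₁ ≠ j₂) (h₁ : a j₁ ≠ 0) (h₂ : a j₂ ≠ 0)
    (hdiag : ¬((∀ k, k ≠ j₁ → k ≠ j₂ → a k = 0) ∧ a j₁ + a j₂ = 0)) :
    #(divSolutions μ a) ≤ 3 * μ ^ (Fintype.card ι - 2) := by
  rw [← card_filter_add_card_filter_not (s := divSolutions μ a)
    (fun γ => a j₁ * ch μ (γ j₁) + a j₂ * ch μ (γ j₂) = 0)]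
  exact (add_le_add (card_filter_pair_eq_zero_le hj h₂ hdiag)
    (card_filter_pair_ne_zero_le hj h₁ h₂)).trans_eq (by ring)

end Counting

lemma exists_eq_zero_off_or_exists_pair {ι M : Type*} [Zero M] {a : ι → M} (ha : a ≠ 0) :
    (∃ j, a j ≠ 0 ∧ ∀ k ≠ j, a k = 0) ∨ ∃ j₁ j₂, j₁ ≠ j₂ ∧ a j₁ ≠ 0 ∧ a j₂ ≠ 0 := by
  obtain ⟨j, hj⟩ := Function.ne_iff.1 ha
  by_cases h : ∀ k ≠ j, a k = 0
  · exact .inl ⟨j, hj, h⟩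
  · push Not at h
    obtain ⟨k, hkj, hk⟩ := h
    exact .inr ⟨j, k, hkj.symm, hj, hk⟩

theorem statement17_general (μ d : ℕ) [NeZero μ]
    (a : Fin d → ℂ) (ha : a ≠ 0) :
    (OmDivInv μ d a).ncard ≤ 3 * μ ^ (d - 2) ∨
      (∃ j : Fin d, OmDivInv μ d a = {γ : Gp μ d | γ ≠ 0 ∧ γ j = 0}) ∨
      (∃ j₁ j₂ : Fin d, j₁ ≠ j₂ ∧
        OmDivInv μ d a = {γ : Gp μ d | γ ≠ 0 ∧ γ j₁ = γ j₂}) := by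
  obtain ⟨j, hj, h0⟩ | ⟨j₁, j₂, hj, h₁, h₂⟩ := exists_eq_zero_off_or_exists_pair ha
  · refine .inr (.inl ⟨j, Set.ext fun γ => ?_⟩)
    rw [mem_OmDivInv, mem_divSolutions_iff_of_eq_zero_off hj h0]
    rfl
  by_cases hdiag : (∀ k, k ≠ j₁ → k ≠ j₂ → a k = 0) ∧ a j₁ + a j₂ = 0
  · refine .inr (.inr ⟨j₁, j₂, hj, Set.ext fun γ => ?_⟩)
    rw [mem_OmDivInv, mem_divSolutions_iff_of_eq_zero_off_pair hj h₁ hdiag.1 hdiag.2]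
    rfl
  refine .inl ?_
  calc (OmDivInv μ d a).ncard ≤ (divSolutions μ a : Set (Gp μ d)).ncard :=
        Set.ncard_le_ncard fun γ hγ => (mem_OmDivInv.1 hγ).2
    _ ≤ 3 * μ ^ (d - 2) := by
        simpa only [Set.ncard_coe_finset, Fintype.card_fin] using
          card_divSolutions_le hj h₁ h₂ hdiag

/-- Lemma `DivFibers`: for every `a ∈ ℂ^d \ {0}`, either
`#Ω_div⁻¹(a) ≤ 3 μ^{d-2}`, or `Ω_div⁻¹(a)` is a coordinate hyperplane `{γ : γ_j = 0}`, or a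
diagonal hyperplane `{γ : γ_{j₁} = γ_{j₂}}`. -/
theorem statement17 (μ d : ℕ) [NeZero μ] (hμ : 2 ≤ μ) (hd : 2 ≤ d)
    (a : Fin d → ℂ) (ha : a ≠ 0) :
    (OmDivInv μ d a).ncard ≤ 3 * μ ^ (d - 2) ∨
      (∃ j : Fin d, OmDivInv μ d a = {γ : Gp μ d | γ ≠ 0 ∧ γ j = 0}) ∨
      (∃ j₁ j₂ : Fin d, j₁ ≠ j₂ ∧
        OmDivInv μ d a = {γ : Gp μ d | γ ≠ 0 ∧ γ j₁ = γ j₂}) :=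
  statement17_general μ d a ha

end TracePaper
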